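/- arXiv:2408.00262 — 2 statements merged into one kernel-verified Lean document; each statement's English description precedes it below -/
import Mathlib

section
/- Strong completeness for CK: for every set Γ of L-formulas and every formula φ, if Γ semantically entails φ on the class of all CK-frames, then Γ ⊢_CK φ. -/
/-- Formulas of the modal language L. -/
inductive Form : Type
  | var : ℕ → Form
  | bot : Form
  | and : Form → Form → Form
  | or : Form → Form → Form
  | imp : Form → Form → Form
  | box : Form → Form
  | dia : Form → Form

namespace Form

/-- Negation abbreviation: ¬φ := φ → ⊥. -/
def neg (φ : Form) : Form := φ.imp bot

/-- Uniform substitution. -/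
def subst (σ : ℕ → Form) : Form → Form
  | var p => σ p
  | bot => bot
  | and a b => and (a.subst σ) (b.subst σ)
  | or a b => or (a.subst σ) (b.subst σ)
  | imp a b => imp (a.subst σ) (b.subst σ)
  | box a => box (a.subst σ)
  | dia a => dia (a.subst σ)

end Form

/-- Substitution instances of the axioms of a standard Hilbert axiomatisation
of intuitionistic propositional logic (the axioms are schematic, so all
substitution instances are included). -/
inductive IPLAx : Form → Prop
  | a1 (φ ψ : Form) : IPLAx (φ.imp (ψ.imp φ))
  | a2 (φ ψ χ : Form) : IPLAx ((φ.imp (ψ.imp χ)).imp ((φ.imp ψ).imp (φ.imp χ)))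
  | a3 (φ ψ : Form) : IPLAx ((φ.and ψ).imp φ)
  | a4 (φ ψ : Form) : IPLAx ((φ.and ψ).imp ψ)
  | a5 (φ ψ : Form) : IPLAx (φ.imp (ψ.imp (φ.and ψ)))
  | a6 (φ ψ : Form) : IPLAx (φ.imp (φ.or ψ))
  | a7 (φ ψ : Form) : IPLAx (ψ.imp (φ.or ψ))
  | a8 (φ ψ χ : Form) : IPLAx ((φ.imp χ).imp ((ψ.imp χ).imp ((φ.or ψ).imp χ)))
  | a9 (φ : Form) : IPLAx (Form.bot.imp φ)

/-- Substitution instances of K_□ : □(φ→ψ) → (□φ → □ψ). -/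
def KBoxAx (χ : Form) : Prop :=
  ∃ φ ψ : Form, χ = ((φ.imp ψ).box).imp ((φ.box).imp (ψ.box))

/-- Substitution instances of K_◇ : □(φ→ψ) → (◇φ → ◇ψ). -/
def KDiaAx (χ : Form) : Prop :=
  ∃ φ ψ : Form, χ = ((φ.imp ψ).box).imp ((φ.dia).imp (ψ.dia))

/-- Axiom instances available in the calculus CK ⊕ Ax : instances of IPL
axioms, of K_□, of K_◇, or substitution instances of members of Ax. -/
def AxInst (Ax : Set Form) (φ : Form) : Prop :=
  IPLAx φ ∨ KBoxAx φ ∨ KDiaAx φ ∨ ∃ ψ ∈ Ax, ∃ σ : ℕ → Form, φ = ψ.subst σ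

/-- The generalised Hilbert calculus CK ⊕ Ax deriving consecutions Γ ⊢_Ax φ:
rules (Ax), (MP), (Nec) and (El). -/
inductive Prv (Ax : Set Form) : Set Form → Form → Prop
  | ax {Γ : Set Form} {φ : Form} : AxInst Ax φ → Prv Ax Γ φ
  | mp {Γ : Set Form} {φ ψ : Form} : Prv Ax Γ φ → Prv Ax Γ (φ.imp ψ) → Prv Ax Γ ψ
  | nec {Γ : Set Form} {φ : Form} : Prv Ax ∅ φ → Prv Ax Γ φ.box
  | el {Γ : Set Form} {φ : Form} : φ ∈ Γ → Prv Ax Γ φ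

/-- A CK-frame (X, e, ≤, R): ≤ is a preorder, e is ≤-maximal (an "exploding"
world), and e R x iff x = e. -/
structure CKFrame where
  W : Type
  le : W → W → Prop
  R : W → W → Prop
  e : W
  le_refl : ∀ x : W, le x x
  le_trans : ∀ {x y z : W}, le x y → le y z → le x z
  e_max : ∀ {x : W}, le e x → x = e
  e_R : ∀ x : W, R e x ↔ x = e

/-- A valuation on a CK-frame: each variable gets a ≤-upset containing e. -/
structure Val (F : CKFrame) where
  V : ℕ → F.W → Prop
  mono : ∀ (p : ℕ) {x y : F.W}, F.le x y → V p x → V p y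
  at_e : ∀ p : ℕ, V p F.e

/-- The forcing relation M, x ⊩ φ of a CK-model (F, V). -/
def Forces (F : CKFrame) (V : Val F) : Form → F.W → Prop
  | .var p, x => V.V p x
  | .bot, x => x = F.e
  | .and a b, x => Forces F V a x ∧ Forces F V b x
  | .or a b, x => Forces F V a x ∨ Forces F V b x
  | .imp a b, x => ∀ y : F.W, F.le x y → Forces F V a y → Forces F V b y
  | .box a, x => ∀ y z : F.W, F.le x y → F.R y z → Forces F V a z
  | .dia a, x => ∀ y : F.W, F.le x y → ∃ z : F.W, F.R y z ∧ Forces F V a z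

/-- A frame validates the consecution Γ ⊢ φ if in every model on it, every
world forcing all of Γ forces φ. -/
def ValidConseq (F : CKFrame) (Γ : Set Form) (φ : Form) : Prop :=
  ∀ (V : Val F) (x : F.W), (∀ ψ ∈ Γ, Forces F V ψ x) → Forces F V φ x

/-- A frame validates a formula φ if every world in every model on it forces φ. -/
def ValidForm (F : CKFrame) (φ : Form) : Prop :=
  ∀ (V : Val F) (x : F.W), Forces F V φ x

/-- Γ semantically entails φ on a class 𝓕 of CK-frames. -/
def SemEntails (𝓕 : Set CKFrame) (Γ : Set Form) (φ : Form) : Prop :=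
  ∀ F ∈ 𝓕, ValidConseq F Γ φ

/-! A non-derivable consecution Γ ⊬ φ is refuted in a canonical model whose worlds are segments
(Θ, 𝒟): a prime theory Θ together with a set 𝒟 of prime theories, its R-successors, each containing
□⁻¹Θ and jointly witnessing every ◇a ∈ Θ; the inconsistent theory, with 𝒟 = {itself}, is the
exploding world. The freedom in 𝒟 is what refutes ◇a ∉ Θ: extend Θ to a prime Θ' ∌ ◇a and let
𝒟 consist of all prime theories containing □⁻¹Θ' and avoiding a. By K_◇ these still witness every
◇b ∈ Θ', and no successor of (Θ', 𝒟) forces a. -/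

variable {Ax : Set Form}

namespace Prv

theorem ipl {Γ : Set Form} {φ : Form} (h : IPLAx φ) : Prv Ax Γ φ :=
  ax (Or.inl h)

theorem kBox {Γ : Set Form} (φ ψ : Form) :
    Prv Ax Γ (((φ.imp ψ).box).imp ((φ.box).imp (ψ.box))) :=
  ax (Or.inr (Or.inl ⟨φ, ψ, rfl⟩))

theorem kDia {Γ : Set Form} (φ ψ : Form) :
    Prv Ax Γ (((φ.imp ψ).box).imp ((φ.dia).imp (ψ.dia))) :=
  ax (Or.inr (Or.inr (Or.inl ⟨φ, ψ, rfl⟩)))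

theorem mono {Γ Γ' : Set Form} {φ : Form} (h : Prv Ax Γ φ) (hΓ : Γ ⊆ Γ') : Prv Ax Γ' φ := by
  induction h generalizing Γ' with
  | ax h => exact ax h
  | mp _ _ ih₁ ih₂ => exact mp (ih₁ hΓ) (ih₂ hΓ)
  | nec h => exact nec h
  | el h => exact el (hΓ h)

theorem imp_intro_of_prv {Γ : Set Form} {b : Form} (a : Form) (h : Prv Ax Γ b) :
    Prv Ax Γ (a.imp b) :=
  mp h (ipl (.a1 b a))

theorem imp_self (Γ : Set Form) (a : Form) : Prv Ax Γ (a.imp a) :=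
  mp (ipl (.a1 a a)) (mp (ipl (.a1 a (a.imp a))) (ipl (.a2 a (a.imp a) a)))

/-- (Nec) is harmless here since it only applies to theorems. -/
theorem deduction {Γ : Set Form} {a b : Form} (h : Prv Ax (insert a Γ) b) :
    Prv Ax Γ (a.imp b) := by
  generalize hΔ : insert a Γ = Δ at h
  induction h with
  | ax h => exact imp_intro_of_prv a (ax h)
  | mp _ _ ih₁ ih₂ => exact mp (ih₁ hΔ) (mp (ih₂ hΔ) (ipl (.a2 _ _ _)))
  | nec h => exact imp_intro_of_prv a (nec h)
  | el h =>
    subst hΔ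
    rcases h with rfl | h
    · exact imp_self Γ _
    · exact imp_intro_of_prv a (el h)

theorem cut {Γ : Set Form} {a b : Form} (ha : Prv Ax Γ a) (hb : Prv Ax (insert a Γ) b) :
    Prv Ax Γ b :=
  mp ha (deduction hb)

theorem box_image {Δ : Set Form} {a : Form} (h : Prv Ax Δ a) : Prv Ax (Form.box '' Δ) a.box := by
  induction h with
  | ax h => exact nec (ax h)
  | mp _ _ ih₁ ih₂ => exact mp ih₁ (mp ih₂ (kBox _ _))
  | nec h => exact nec (nec h)
  | el h => exact el ⟨_, h, rfl⟩

theorem exists_mem_of_sUnion {c : Set (Set Form)} (hc : DirectedOn (· ⊆ ·) c)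
    (hne : c.Nonempty) {a : Form} (h : Prv Ax (⋃₀ c) a) : ∃ t ∈ c, Prv Ax t a := by
  generalize hΔ : ⋃₀ c = Δ at h
  induction h with
  | ax h => exact hne.imp fun t ht => ⟨ht, ax h⟩
  | nec h => exact hne.imp fun t ht => ⟨ht, nec h⟩
  | el h =>
    obtain ⟨t, ht, hat⟩ := hΔ ▸ h
    exact ⟨t, ht, el hat⟩
  | mp _ _ ih₁ ih₂ =>
    obtain ⟨t₁, ht₁, h₁⟩ := ih₁ hΔ
    obtain ⟨t₂, ht₂, h₂⟩ := ih₂ hΔ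
    obtain ⟨t, ht, ht₁t, ht₂t⟩ := hc t₁ ht₁ t₂ ht₂
    exact ⟨t, ht, mp (h₁.mono ht₁t) (h₂.mono ht₂t)⟩

end Prv

structure IsPrimeTheory (Ax Θ : Set Form) : Prop where
  mem_of_prv {φ : Form} : Prv Ax Θ φ → φ ∈ Θ
  mem_or_mem_of_or_mem {a b : Form} : a.or b ∈ Θ → a ∈ Θ ∨ b ∈ Θ

theorem isPrimeTheory_univ : IsPrimeTheory Ax Set.univ :=
  ⟨fun _ => trivial, fun _ => .inl trivial⟩

namespace IsPrimeTheory

variable {Θ : Set Form} {a b : Form}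

theorem eq_univ_of_bot_mem (hΘ : IsPrimeTheory Ax Θ) (h : Form.bot ∈ Θ) : Θ = Set.univ :=
  Set.eq_univ_of_forall fun φ => hΘ.mem_of_prv (.mp (.el h) (.ipl (.a9 φ)))

theorem and_mem_iff (hΘ : IsPrimeTheory Ax Θ) : a.and b ∈ Θ ↔ a ∈ Θ ∧ b ∈ Θ :=
  ⟨fun h => ⟨hΘ.mem_of_prv (.mp (.el h) (.ipl (.a3 a b))),
      hΘ.mem_of_prv (.mp (.el h) (.ipl (.a4 a b)))⟩,
    fun ⟨ha, hb⟩ => hΘ.mem_of_prv (.mp (.el hb) (.mp (.el ha) (.ipl (.a5 a b))))⟩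

theorem or_mem_iff (hΘ : IsPrimeTheory Ax Θ) : a.or b ∈ Θ ↔ a ∈ Θ ∨ b ∈ Θ :=
  ⟨hΘ.mem_or_mem_of_or_mem, fun h => h.elim
    (fun ha => hΘ.mem_of_prv (.mp (.el ha) (.ipl (.a6 a b))))
    (fun hb => hΘ.mem_of_prv (.mp (.el hb) (.ipl (.a7 a b))))⟩

theorem mem_of_imp_mem (hΘ : IsPrimeTheory Ax Θ) (h : a.imp b ∈ Θ) (ha : a ∈ Θ) : b ∈ Θ :=
  hΘ.mem_of_prv (.mp (.el ha) (.el h))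

theorem box_mem_of_prv (hΘ : IsPrimeTheory Ax Θ) (h : Prv Ax (Form.box ⁻¹' Θ) a) :
    a.box ∈ Θ :=
  hΘ.mem_of_prv (h.box_image.mono (Set.image_preimage_subset _ _))

theorem dia_mem_of_prv (hΘ : IsPrimeTheory Ax Θ) (h : Prv Ax (insert b (Form.box ⁻¹' Θ)) a)
    (hb : b.dia ∈ Θ) : a.dia ∈ Θ :=
  hΘ.mem_of_prv (.mp (.el hb) (.mp (.el (hΘ.box_mem_of_prv h.deduction)) (.kDia b a)))

end IsPrimeTheory

/-- Lindenbaum's lemma. -/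
theorem exists_isPrimeTheory_of_not_prv {Δ : Set Form} {a : Form} (h : ¬Prv Ax Δ a) :
    ∃ Θ, Δ ⊆ Θ ∧ IsPrimeTheory Ax Θ ∧ a ∉ Θ := by
  obtain ⟨Θ, hΔΘ, hmax⟩ := zorn_subset_nonempty {Δ' | ¬Prv Ax Δ' a}
    (fun c hcS hc hne => ⟨⋃₀ c,
      fun hu => (Prv.exists_mem_of_sUnion hc.directedOn hne hu).elim fun _ ⟨ht, hp⟩ => hcS ht hp,
      fun _ => Set.subset_sUnion_of_mem⟩) Δ h
  have hΘ : ¬Prv Ax Θ a := hmax.prop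
  have prv_of_not_mem {ψ : Form} (hψ : ψ ∉ Θ) : Prv Ax (insert ψ Θ) a :=
    by_contra fun hn => hψ (hmax.mem_of_prop_insert hn)
  refine ⟨Θ, hΔΘ, ⟨fun {ψ} hψ => ?_, fun {b c} hbc => ?_⟩, fun ha => hΘ (.el ha)⟩
  · by_contra hψΘ
    exact hΘ (hψ.cut (prv_of_not_mem hψΘ))
  · by_contra! hn
    exact hΘ (.mp (.el hbc) (.mp (prv_of_not_mem hn.2).deduction
      (.mp (prv_of_not_mem hn.1).deduction (.ipl (.a8 b c a)))))

@[ext]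
structure Segment (Ax : Set Form) where
  theory : Set Form
  succs : Set (Set Form)
  isPrimeTheory : IsPrimeTheory Ax theory
  isPrimeTheory_of_mem_succs : ∀ Λ ∈ succs, IsPrimeTheory Ax Λ
  mem_of_box_mem : ∀ Λ ∈ succs, ∀ {a : Form}, a.box ∈ theory → a ∈ Λ
  exists_mem_of_dia_mem : ∀ {a : Form}, a.dia ∈ theory → ∃ Λ ∈ succs, a ∈ Λ
  succs_eq_of_bot_mem : Form.bot ∈ theory → succs = {Set.univ}

namespace Segment

variable {Θ Λ : Set Form}

def ofPrime (hΘ : IsPrimeTheory Ax Θ) : Segment Ax where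
  theory := Θ
  succs := {Set.univ}
  isPrimeTheory := hΘ
  isPrimeTheory_of_mem_succs _ hΛ := hΛ ▸ isPrimeTheory_univ
  mem_of_box_mem _ hΛ _ _ := hΛ ▸ trivial
  exists_mem_of_dia_mem _ := ⟨Set.univ, rfl, trivial⟩
  succs_eq_of_bot_mem _ := rfl

def top : Segment Ax := ofPrime isPrimeTheory_univ

theorem eq_top_of_bot_mem (x : Segment Ax) (h : Form.bot ∈ x.theory) : x = top :=
  Segment.ext (x.isPrimeTheory.eq_univ_of_bot_mem h) (x.succs_eq_of_bot_mem h)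

def withSucc (hΘ : IsPrimeTheory Ax Θ) (hbot : Form.bot ∉ Θ) (hΛ : IsPrimeTheory Ax Λ)
    (hΘΛ : Form.box ⁻¹' Θ ⊆ Λ) : Segment Ax where
  theory := Θ
  succs := {Λ, Set.univ}
  isPrimeTheory := hΘ
  isPrimeTheory_of_mem_succs _ := by
    rintro (rfl | rfl)
    exacts [hΛ, isPrimeTheory_univ]
  mem_of_box_mem _ := by
    rintro (rfl | rfl) _ ha
    exacts [hΘΛ ha, trivial]
  exists_mem_of_dia_mem _ := ⟨Set.univ, .inr rfl, trivial⟩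
  succs_eq_of_bot_mem h := absurd h hbot

def avoiding (hΘ : IsPrimeTheory Ax Θ) {a : Form} (ha : a.dia ∉ Θ) : Segment Ax where
  theory := Θ
  succs := {Λ | IsPrimeTheory Ax Λ ∧ Form.box ⁻¹' Θ ⊆ Λ ∧ a ∉ Λ}
  isPrimeTheory := hΘ
  isPrimeTheory_of_mem_succs _ hΛ := hΛ.1
  mem_of_box_mem _ hΛ _ hb := hΛ.2.1 hb
  exists_mem_of_dia_mem {b} hb := by
    obtain ⟨Λ, hsub, hΛ, haΛ⟩ := exists_isPrimeTheory_of_not_prv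
      (Δ := insert b (Form.box ⁻¹' Θ)) fun h => ha (hΘ.dia_mem_of_prv h hb)
    exact ⟨Λ, ⟨hΛ, fun _ hc => hsub (.inr hc), haΛ⟩, hsub (.inl rfl)⟩
  succs_eq_of_bot_mem h := absurd (hΘ.mem_of_prv (.mp (.el h) (.ipl (.a9 _)))) ha

end Segment

def canonicalFrame (Ax : Set Form) : CKFrame where
  W := Segment Ax
  le x y := x.theory ⊆ y.theory
  R x y := y.theory ∈ x.succs
  e := Segment.top
  le_refl _ := subset_rfl
  le_trans h₁ h₂ := h₁.trans h₂
  e_max h := Segment.eq_top_of_bot_mem _ (h trivial)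
  e_R x := ⟨fun h => x.eq_top_of_bot_mem (Set.eq_univ_iff_forall.1 h _), fun h => by subst h; rfl⟩

def canonicalVal (Ax : Set Form) : Val (canonicalFrame Ax) where
  V p x := Form.var p ∈ x.theory
  mono _ _ _ h hp := h hp
  at_e _ := trivial

def Truthful (Ax : Set Form) (φ : Form) : Prop :=
  ∀ x : Segment Ax, Forces (canonicalFrame Ax) (canonicalVal Ax) φ x ↔ φ ∈ x.theory

namespace Truthful

variable {a b : Form}

theorem and (ha : Truthful Ax a) (hb : Truthful Ax b) : Truthful Ax (a.and b) := fun x =>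
  (and_congr (ha x) (hb x)).trans x.isPrimeTheory.and_mem_iff.symm

theorem or (ha : Truthful Ax a) (hb : Truthful Ax b) : Truthful Ax (a.or b) := fun x =>
  (or_congr (ha x) (hb x)).trans x.isPrimeTheory.or_mem_iff.symm

theorem imp (ha : Truthful Ax a) (hb : Truthful Ax b) : Truthful Ax (a.imp b) := by
  intro x
  constructor
  · intro hf
    by_contra hab
    obtain ⟨Θ, hsub, hΘ, hbΘ⟩ := exists_isPrimeTheory_of_not_prv (Δ := insert a x.theory)
      fun h => hab (x.isPrimeTheory.mem_of_prv h.deduction)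
    exact hbΘ ((hb _).1
      (hf (.ofPrime hΘ) (fun _ hψ => hsub (.inr hψ)) ((ha _).2 (hsub (.inl rfl)))))
  · intro hab y hxy hay
    exact (hb y).2 (y.isPrimeTheory.mem_of_imp_mem (hxy hab) ((ha y).1 hay))

theorem box (ha : Truthful Ax a) : Truthful Ax a.box := by
  intro x
  constructor
  · intro hf
    by_contra hab
    have hbot : Form.bot ∉ x.theory := fun h => hab (x.isPrimeTheory.eq_univ_of_bot_mem h ▸ trivial)
    obtain ⟨Λ, hsub, hΛ, haΛ⟩ := exists_isPrimeTheory_of_not_prv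
      fun h => hab (x.isPrimeTheory.box_mem_of_prv h)
    exact haΛ ((ha _).1
      (hf (.withSucc x.isPrimeTheory hbot hΛ hsub) (.ofPrime hΛ) subset_rfl (.inl rfl)))
  · intro hab y z hxy hyz
    exact (ha z).2 (y.mem_of_box_mem _ hyz (hxy hab))

theorem dia (ha : Truthful Ax a) : Truthful Ax a.dia := by
  intro x
  constructor
  · intro hf
    by_contra hda
    obtain ⟨Θ, hsub, hΘ, hdaΘ⟩ := exists_isPrimeTheory_of_not_prv
      fun h => hda (x.isPrimeTheory.mem_of_prv h)
    obtain ⟨z, ⟨-, -, haz⟩, hz⟩ := hf (Segment.avoiding hΘ hdaΘ) hsub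
    exact haz ((ha z).1 hz)
  · intro hda y hxy
    obtain ⟨Λ, hΛ, haΛ⟩ := y.exists_mem_of_dia_mem (hxy hda)
    exact ⟨.ofPrime (y.isPrimeTheory_of_mem_succs Λ hΛ), hΛ, (ha _).2 haΛ⟩

end Truthful

theorem truthful (φ : Form) : Truthful Ax φ := by
  induction φ with
  | var p => exact fun _ => Iff.rfl
  | bot => exact fun x => ⟨fun h => h ▸ trivial, x.eq_top_of_bot_mem⟩
  | and a b iha ihb => exact iha.and ihb
  | or a b iha ihb => exact iha.or ihb
  | imp a b iha ihb => exact iha.imp ihb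
  | box a ih => exact ih.box
  | dia a ih => exact ih.dia

theorem prv_of_validConseq_canonicalFrame {Γ : Set Form} {φ : Form}
    (h : ValidConseq (canonicalFrame Ax) Γ φ) : Prv Ax Γ φ := by
  by_contra hφ
  obtain ⟨Θ, hΓΘ, hΘ, hφΘ⟩ := exists_isPrimeTheory_of_not_prv hφ
  exact hφΘ ((truthful φ (.ofPrime hΘ)).1
    (h _ (.ofPrime hΘ) fun ψ hψ => (truthful ψ _).2 (hΓΘ hψ)))

/-- Strong completeness for CK: if Γ semantically entails φ on the class of
all CK-frames, then Γ ⊢_CK φ. -/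
theorem ck_strong_completeness (Γ : Set Form) (φ : Form)
    (h : ∀ F : CKFrame, ValidConseq F Γ φ) : Prv ∅ Γ φ :=
  prv_of_validConseq_canonicalFrame (h _)
end

section
/- If a CK-frame (X, e, ≤, R) satisfies the condition (Idb-suff): for all x, y, z with xRy and y ≤ z, there exists u with x ≤ u and uRz such that for every s with u ≤ s there exists t with sRt and z ≤ t — then the frame validates every instance of the axiom I_◇□: (◇φ → □ψ) → □(φ → ψ). -/
/-- (Idb-suff). -/
def IdbSuff (F : CKFrame) : Prop :=
  ∀ x y z : F.W, F.R x y → F.le y z →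
    ∃ u : F.W, F.le x u ∧ F.R u z ∧
      ∀ s : F.W, F.le u s → ∃ t : F.W, F.R s t ∧ F.le z t

lemma forces_mono (F : CKFrame) (V : Val F) (φ : Form) :
    ∀ {x y : F.W}, F.le x y → Forces F V φ x → Forces F V φ y := by
  induction φ with
  | var p => intro x y hxy hx; exact V.mono p hxy hx
  | bot => intro x y hxy hx; subst hx; exact F.e_max hxy
  | and a b iha ihb => intro x y hxy hx; exact ⟨iha hxy hx.1, ihb hxy hx.2⟩
  | or a b iha ihb =>
      intro x y hxy hx
      cases hx with
      | inl hh => exact Or.inl (iha hxy hh)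
      | inr hh => exact Or.inr (ihb hxy hh)
  | imp a b iha ihb =>
      intro x y hxy hx z hyz ha
      exact hx z (F.le_trans hxy hyz) ha
  | box a ih =>
      intro x y hxy hx u z hyu hr
      exact hx u z (F.le_trans hxy hyu) hr
  | dia a ih =>
      intro x y hxy hx u hyu
      exact hx u (F.le_trans hxy hyu)

/-- (Idb-suff) implies validity of every instance of
I_◇□ : (◇φ → □ψ) → □(φ → ψ). -/
theorem idbSuff_valid (F : CKFrame) (h : IdbSuff F) :
    ∀ φ ψ : Form, ValidForm F (((φ.dia).imp (ψ.box)).imp ((φ.imp ψ).box)) := by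
  intro φ ψ V x
  intro y hxy hyp a b hya hab c hbc hcφ
  obtain ⟨u, hau, huc, hall⟩ := h a b c hab hbc
  have hdia : Forces F V φ.dia u := by
    intro s hus
    obtain ⟨t, hst, hct⟩ := hall s hus
    exact ⟨t, hst, forces_mono F V φ hct hcφ⟩
  have hbox := hyp u (F.le_trans hya hau) hdia
  exact hbox u c (F.le_refl u) huc
end
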